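/- Let N, n be positive integers and let A and B be disjoint sets of n points each in {0,…,N}² ⊆ ℝ². Let ℓ be a nonnegative integer, and for a = (a₁, a₂) ∈ A and b = (b₁, b₂) ∈ B define d_ℓ(a, b) = ⌊2^ℓ · ‖a − b‖⌋ and W_ℓ(a, b) = (2nN² + 1)·d_ℓ(a, b) + (b₂ − a₂)(b₁ + a₁). If M₁ and M₂ are bijections A → B with Σ_{a∈A} d_ℓ(a, M₁(a)) > Σ_{a∈A} d_ℓ(a, M₂(a)), then Σ_{a∈A} W_ℓ(a, M₁(a)) > Σ_{a∈A} W_ℓ(a, M₂(a)). In particular, every bijection minimizing Σ W_ℓ also minimizes Σ d_ℓ. -/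

import Mathlib

open scoped BigOperators

attribute [local instance] Classical.propDecidable

/-- `p` is a point of the integer grid `{0,…,N}² ⊆ ℝ²`. -/
def OnGrid (N : ℕ) (p : EuclideanSpace ℝ (Fin 2)) : Prop :=
  ∀ i : Fin 2, ∃ m : ℕ, m ≤ N ∧ p i = (m : ℝ)

/-- The approximate distance `d_ℓ(a, b) = ⌊2^ℓ · ‖a - b‖⌋`. -/
noncomputable def dl (l : ℕ) (a b : EuclideanSpace ℝ (Fin 2)) : ℤ :=
  ⌊(2 : ℝ) ^ l * ‖a - b‖⌋

/-- The `d_ℓ`-weight of a perfect matching (bijection) `M` between `A` and `B`. -/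
noncomputable def dlWeight (l : ℕ) (A B : Finset (EuclideanSpace ℝ (Fin 2)))
    (M : {x // x ∈ A} → {y // y ∈ B}) : ℤ :=
  ∑ a : {x // x ∈ A},
    dl l (a : EuclideanSpace ℝ (Fin 2)) (M a : EuclideanSpace ℝ (Fin 2))

/-- The combined weight function
`W_ℓ(a, b) = (2nN² + 1)·d_ℓ(a, b) + (b₂ - a₂)(b₁ + a₁)`. -/
noncomputable def Wl (n N l : ℕ) (a b : EuclideanSpace ℝ (Fin 2)) : ℝ :=
  (2 * n * N ^ 2 + 1 : ℝ) * (dl l a b : ℤ) + (b 1 - a 1) * (b 0 + a 0)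

/-- The `W_ℓ`-weight of a perfect matching (bijection) `M` between `A` and `B`. -/
noncomputable def WlWeight (n N l : ℕ) (A B : Finset (EuclideanSpace ℝ (Fin 2)))
    (M : {x // x ∈ A} → {y // y ∈ B}) : ℝ :=
  ∑ a : {x // x ∈ A},
    Wl n N l (a : EuclideanSpace ℝ (Fin 2)) (M a : EuclideanSpace ℝ (Fin 2))

/-!
Write the Tewari–Vinodchandran weight as `W_TV(a, b) = φ(b) - φ(a) + det(a, b)` with
`φ(p) = p₀ p₁`. Summed over a perfect matching, the `φ`-part does not depend on the matching,
and each determinant of two grid points lies in `[-N², N²]`. So two matchings differ in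
`Σ W_TV` by at most `2nN² < 2nN² + 1`, which cannot outweigh a difference of at least one in the
integer-valued `Σ d_ℓ`, scaled by `2nN² + 1`.
-/

open Finset

theorem sum_lt_sum_of_int_part_lt {α β : Type*} [Fintype α] [Fintype β]
    (w : α → β → ℝ) (d : α → β → ℤ) (φ : β → ℝ) (ψ : α → ℝ) (c : α → β → ℝ) (K C : ℝ)
    (hw : ∀ a b, w a b = K * d a b + (φ b - ψ a) + c a b)
    (hc : ∀ a b, |c a b| ≤ C) (hK : 2 * Fintype.card α * C < K)
    {M₁ M₂ : α → β} (h₁ : Function.Bijective M₁) (h₂ : Function.Bijective M₂)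
    (hd : ∑ a, d a (M₂ a) < ∑ a, d a (M₁ a)) :
    ∑ a, w a (M₂ a) < ∑ a, w a (M₁ a) := by
  have hsplit : ∀ M : α → β, Function.Bijective M →
      ∑ a, w a (M a) = K * ((∑ a, d a (M a) : ℤ) : ℝ) + (∑ b, φ b - ∑ a, ψ a) + ∑ a, c a (M a) := by
    intro M hM
    have hφ : ∑ a, φ (M a) = ∑ b, φ b := Fintype.sum_bijective M hM _ _ fun _ => rfl
    simp only [hw, sum_add_distrib, sum_sub_distrib, Int.cast_sum, mul_sum, hφ]
  have hcsum : ∀ M : α → β, |∑ a, c a (M a)| ≤ Fintype.card α * C := fun M =>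
    calc |∑ a, c a (M a)| ≤ ∑ a, |c a (M a)| := abs_sum_le_sum_abs _ _
      _ ≤ Fintype.card α * C := by
        simpa using sum_le_card_nsmul univ _ C fun a _ => hc a (M a)
  have hd' : ((∑ a, d a (M₂ a) : ℤ) : ℝ) + 1 ≤ ((∑ a, d a (M₁ a) : ℤ) : ℝ) := by
    exact_mod_cast hd
  have hα : Nonempty α := by
    by_contra h
    rw [not_nonempty_iff] at h
    simp at hd
  obtain ⟨a₀⟩ := hα
  have hC : 0 ≤ C := (abs_nonneg _).trans (hc a₀ (M₁ a₀))
  have hK0 : 0 ≤ K := (by positivity : (0 : ℝ) ≤ 2 * Fintype.card α * C).trans hK.le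
  have hscaled := mul_le_mul_of_nonneg_left hd' hK0
  rw [hsplit M₁ h₁, hsplit M₂ h₂]
  linarith [abs_le.mp (hcsum M₁), abs_le.mp (hcsum M₂)]

theorem OnGrid.mem_Icc {N : ℕ} {p : EuclideanSpace ℝ (Fin 2)} (hp : OnGrid N p) (i : Fin 2) :
    p i ∈ Set.Icc (0 : ℝ) N := by
  obtain ⟨m, hm, he⟩ := hp i
  rw [he]
  exact ⟨m.cast_nonneg, Nat.cast_le.mpr hm⟩

theorem abs_mul_sub_mul_le_sq {x y z t D : ℝ} (hx : x ∈ Set.Icc 0 D) (hy : y ∈ Set.Icc 0 D)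
    (hz : z ∈ Set.Icc 0 D) (ht : t ∈ Set.Icc 0 D) : |x * y - z * t| ≤ D ^ 2 := by
  obtain ⟨hx0, hxD⟩ := hx
  obtain ⟨hy0, hyD⟩ := hy
  obtain ⟨hz0, hzD⟩ := hz
  obtain ⟨ht0, htD⟩ := ht
  rw [abs_le]
  constructor <;> nlinarith [mul_le_mul hxD hyD hy0 (hx0.trans hxD),
    mul_le_mul hzD htD ht0 (hz0.trans hzD), mul_nonneg hx0 hy0, mul_nonneg hz0 ht0]

theorem Wl_eq (n N l : ℕ) (a b : EuclideanSpace ℝ (Fin 2)) :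
    Wl n N l a b = (2 * n * N ^ 2 + 1 : ℝ) * dl l a b + (b 0 * b 1 - a 0 * a 1)
      + (a 0 * b 1 - a 1 * b 0) := by
  rw [Wl]
  ring

theorem WlWeight_lt_of_dlWeight_lt {N n l : ℕ} {A B : Finset (EuclideanSpace ℝ (Fin 2))}
    (hcardA : A.card = n) (hgrid : ∀ p ∈ A ∪ B, OnGrid N p)
    {M₁ M₂ : {x // x ∈ A} → {y // y ∈ B}} (h₁ : Function.Bijective M₁)
    (h₂ : Function.Bijective M₂) (hd : dlWeight l A B M₂ < dlWeight l A B M₁) :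
    WlWeight n N l A B M₂ < WlWeight n N l A B M₁ := by
  have hA (a : {x // x ∈ A}) := (hgrid a (mem_union_left _ a.2)).mem_Icc
  have hB (b : {y // y ∈ B}) := (hgrid b (mem_union_right _ b.2)).mem_Icc
  exact sum_lt_sum_of_int_part_lt (α := {x // x ∈ A}) (β := {y // y ∈ B})
    (fun a b => Wl n N l a b) (fun a b => dl l a b) (fun b => b.1 0 * b.1 1)
    (fun a => a.1 0 * a.1 1) (fun a b => a.1 0 * b.1 1 - a.1 1 * b.1 0) _ ((N : ℝ) ^ 2)
    (fun a b => Wl_eq n N l a b)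
    (fun a b => abs_mul_sub_mul_le_sq (hA a 0) (hB b 1) (hA a 1) (hB b 0))
    (by rw [Fintype.card_coe, hcardA]; linarith) h₁ h₂ hd

theorem stmt_14_general (N n l : ℕ)
    (A B : Finset (EuclideanSpace ℝ (Fin 2)))
    (hcardA : A.card = n)
    (hgrid : ∀ p ∈ A ∪ B, OnGrid N p) :
    (∀ M₁ M₂ : {x // x ∈ A} → {y // y ∈ B},
      Function.Bijective M₁ → Function.Bijective M₂ →
      dlWeight l A B M₂ < dlWeight l A B M₁ →
      WlWeight n N l A B M₂ < WlWeight n N l A B M₁) ∧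
    (∀ M : {x // x ∈ A} → {y // y ∈ B}, Function.Bijective M →
      (∀ M' : {x // x ∈ A} → {y // y ∈ B}, Function.Bijective M' →
        WlWeight n N l A B M ≤ WlWeight n N l A B M') →
      (∀ M' : {x // x ∈ A} → {y // y ∈ B}, Function.Bijective M' →
        dlWeight l A B M ≤ dlWeight l A B M')) := by
  refine ⟨fun M₁ M₂ h₁ h₂ hd => WlWeight_lt_of_dlWeight_lt hcardA hgrid h₁ h₂ hd,
    fun M hM hmin M' hM' => ?_⟩
  by_contra! h
  exact (WlWeight_lt_of_dlWeight_lt hcardA hgrid hM hM' h).not_ge (hmin M' hM')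

/-- For disjoint `n`-point sets `A, B` on the grid `{0,…,N}²`: if two perfect matchings
satisfy `Σ d_ℓ(M₁) > Σ d_ℓ(M₂)`, then `Σ W_ℓ(M₁) > Σ W_ℓ(M₂)`; in particular every
perfect matching minimizing `Σ W_ℓ` also minimizes `Σ d_ℓ`. -/
theorem stmt_14 (N n l : ℕ) (hN : 0 < N) (hn : 0 < n)
    (A B : Finset (EuclideanSpace ℝ (Fin 2)))
    (hAB : Disjoint A B) (hcardA : A.card = n) (hcardB : B.card = n)
    (hgrid : ∀ p ∈ A ∪ B, OnGrid N p) :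
    (∀ M₁ M₂ : {x // x ∈ A} → {y // y ∈ B},
      Function.Bijective M₁ → Function.Bijective M₂ →
      dlWeight l A B M₂ < dlWeight l A B M₁ →
      WlWeight n N l A B M₂ < WlWeight n N l A B M₁) ∧
    (∀ M : {x // x ∈ A} → {y // y ∈ B}, Function.Bijective M →
      (∀ M' : {x // x ∈ A} → {y // y ∈ B}, Function.Bijective M' →
        WlWeight n N l A B M ≤ WlWeight n N l A B M') →
      (∀ M' : {x // x ∈ A} → {y // y ∈ B}, Function.Bijective M' →
        dlWeight l A B M ≤ dlWeight l A B M')) :=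
  stmt_14_general N n l A B hcardA hgrid
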